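/- Assume each Y_i (0 ≤ i ≤ n) is a compact Polish space and each X_i is a Polish space, and let P = (p_i) be a feedback family satisfying condition (CA). Let Q^α (α = 1,2,…) be forward families such that the joint measures ←P⊗→Q^α converge weakly to a Borel probability measure π⁰ on X_{0,n} × Y_{0,n}. Then there exists a forward family Q⁰ such that π⁰ = ←P⊗→Q⁰; in particular, the limiting joint measure has the same feedback family: for each 0 ≤ i ≤ n, the conditional distribution under π⁰ of the coordinate x_i given the past coordinates (x^{i-1}, y^{i-1}) equals p_i(·; x^{i-1}, y^{i-1}) for π⁰-almost every (x^{i-1}, y^{i-1}). -/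

import Mathlib

open MeasureTheory ProbabilityTheory Filter
open scoped ENNReal NNReal

namespace PaperDI

lemma measurable_finSnoc {Z : ℕ → Type*} [∀ i, MeasurableSpace (Z i)] (k : ℕ) :
    Measurable (fun p : (∀ j : Fin k, Z j) × Z k =>
      (Fin.snoc p.1 p.2 : ∀ j : Fin (k + 1), Z j)) := by
  apply measurable_pi_lambda
  intro j
  induction j using Fin.lastCases with
  | last => simpa using measurable_snd
  | cast i =>
    simp
    exact (measurable_pi_apply i).comp measurable_fst

/-- Restriction of a prefix of length `k+1` to the prefix of length `k`. -/
def restr {Z : ℕ → Type*} (k : ℕ) (z : ∀ j : Fin (k + 1), Z j) : ∀ j : Fin k, Z j :=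
  fun j => z j.castSucc

lemma measurable_restr {Z : ℕ → Type*} [∀ i, MeasurableSpace (Z i)] (k : ℕ) :
    Measurable (restr (Z := Z) k) :=
  measurable_pi_lambda _ fun _ => measurable_pi_apply _

variable (X Y : ℕ → Type*) [∀ i, MeasurableSpace (X i)] [∀ i, MeasurableSpace (Y i)]

/-- A feedback family `(p_0, …, p_n)`: `p_0` is a probability measure on `X_0` (a Markov
kernel from the one-point space of empty prefixes) and `p_i` is a Markov kernel from
`X_{0,i-1} × Y_{0,i-1}` to `X_i`. -/
structure FeedbackFamily (n : ℕ) where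
  p : ∀ i : Fin (n + 1), Kernel ((∀ j : Fin (i : ℕ), X j) × (∀ j : Fin (i : ℕ), Y j)) (X i)
  markov : ∀ i, IsMarkovKernel (p i)

/-- A forward family `(q_0, …, q_n)`: `q_i` is a Markov kernel from
`Y_{0,i-1} × X_{0,i}` to `Y_i`. -/
structure ForwardFamily (n : ℕ) where
  q : ∀ i : Fin (n + 1), Kernel ((∀ j : Fin (i : ℕ), Y j) × (∀ j : Fin ((i : ℕ) + 1), X j)) (Y i)
  markov : ∀ i, IsMarkovKernel (q i)

variable {X Y} {n : ℕ}

/-- The causally conditioned kernel `←P_{0,k}` from `Y_{0,k-1}` to `X_{0,k}`. -/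
noncomputable def back (P : FeedbackFamily X Y n) :
    (k : ℕ) → k ≤ n → Kernel (∀ j : Fin k, Y j) (∀ j : Fin (k + 1), X j)
  | 0, _ =>
      Kernel.map ((P.p ⟨0, Nat.succ_pos n⟩).comap (fun _ => default) measurable_const)
        (fun x0 => (Fin.snoc default x0 : ∀ j : Fin 1, X j))
  | (k + 1), h =>
      Kernel.map
        (((back P k (by omega)).comap (restr k) (measurable_restr k)) ⊗ₖ
          ((P.p ⟨k + 1, by omega⟩).comap
            (fun t : (∀ j : Fin (k + 1), Y j) × (∀ j : Fin (k + 1), X j) => (t.2, t.1))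
            (measurable_snd.prodMk measurable_fst)))
        (fun t : (∀ j : Fin (k + 1), X j) × X (k + 1) =>
          (Fin.snoc t.1 t.2 : ∀ j : Fin (k + 2), X j))

/-- The causally conditioned kernel `→Q_{0,k}` from `X_{0,k}` to `Y_{0,k}`. -/
noncomputable def fwd (Q : ForwardFamily X Y n) :
    (k : ℕ) → k ≤ n → Kernel (∀ j : Fin (k + 1), X j) (∀ j : Fin (k + 1), Y j)
  | 0, _ =>
      Kernel.map ((Q.q ⟨0, Nat.succ_pos n⟩).comap (fun x => (default, x))
          (measurable_const.prodMk measurable_id))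
        (fun y0 => (Fin.snoc default y0 : ∀ j : Fin 1, Y j))
  | (k + 1), h =>
      Kernel.map
        (((fwd Q k (by omega)).comap (restr (k + 1)) (measurable_restr (k + 1))) ⊗ₖ
          ((Q.q ⟨k + 1, by omega⟩).comap
            (fun t : (∀ j : Fin (k + 2), X j) × (∀ j : Fin (k + 1), Y j) => (t.2, t.1))
            (measurable_snd.prodMk measurable_fst)))
        (fun t : (∀ j : Fin (k + 1), Y j) × Y (k + 1) =>
          (Fin.snoc t.1 t.2 : ∀ j : Fin (k + 2), Y j))

/-- The interleaved joint measure of `←P ⊗ →Q` on prefixes of length `k`. -/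
noncomputable def jointAux (P : FeedbackFamily X Y n) (Q : ForwardFamily X Y n) :
    (k : ℕ) → k ≤ n + 1 → Measure ((∀ j : Fin k, X j) × (∀ j : Fin k, Y j))
  | 0, _ => Measure.dirac default
  | (k + 1), h =>
      let μ1 := (jointAux P Q k (by omega)) ⊗ₘ (P.p ⟨k, by omega⟩)
      let μ2 := μ1.map
          (fun t : ((∀ j : Fin k, X j) × (∀ j : Fin k, Y j)) × X k =>
            (t.1.2, (Fin.snoc t.1.1 t.2 : ∀ j : Fin (k + 1), X j)))
      let μ3 := μ2 ⊗ₘ (Q.q ⟨k, by omega⟩)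
      μ3.map
          (fun t : ((∀ j : Fin k, Y j) × (∀ j : Fin (k + 1), X j)) × Y k =>
            (t.1.2, (Fin.snoc t.1.1 t.2 : ∀ j : Fin (k + 1), Y j)))

/-- The joint measure `←P ⊗ →Q` on `X_{0,n} × Y_{0,n}`. -/
noncomputable def joint (P : FeedbackFamily X Y n) (Q : ForwardFamily X Y n) :
    Measure ((∀ j : Fin (n + 1), X j) × (∀ j : Fin (n + 1), Y j)) :=
  jointAux P Q (n + 1) le_rfl

/-- The marginal `ν_{0,n}` of `←P ⊗ →Q` on `Y_{0,n}`. -/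
noncomputable def nu (P : FeedbackFamily X Y n) (Q : ForwardFamily X Y n) :
    Measure (∀ j : Fin (n + 1), Y j) :=
  (joint P Q).map Prod.snd

/-- The measure `←P ⊗ λ` on `X_{0,n} × Y_{0,n}`, i.e. the measure
`←P_{0,n}(dx^n | y^{n-1}) ⊗ λ(dy^n)`. -/
noncomputable def backProd (P : FeedbackFamily X Y n) (lam : Measure (∀ j : Fin (n + 1), Y j)) :
    Measure ((∀ j : Fin (n + 1), X j) × (∀ j : Fin (n + 1), Y j)) :=
  (lam ⊗ₘ ((back P n le_rfl).comap (restr n) (measurable_restr n))).map Prod.swap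

open Classical in
/-- Kullback-Leibler divergence (relative entropy) `D(μ ‖ ν)`, with the convention
`D(μ ‖ ν) = ∞` when absolute continuity fails. -/
noncomputable def KL {Z : Type*} [MeasurableSpace Z] (μ ν : Measure Z) : ℝ≥0∞ :=
  if μ ≪ ν ∧ Integrable (llr μ ν) μ then ENNReal.ofReal (∫ z, llr μ ν z ∂μ) else ⊤

/-- Directed information `I(←P, →Q) = D(←P ⊗ →Q ‖ ←P ⊗ ν_{0,n})`. -/
noncomputable def DI (P : FeedbackFamily X Y n) (Q : ForwardFamily X Y n) : ℝ≥0∞ :=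
  KL (joint P Q) (backProd P (nu P Q))

/-- Weak convergence of a sequence of measures: integrals of every bounded continuous
real-valued function converge. -/
def WeakTendsto {Z : Type*} [MeasurableSpace Z] [TopologicalSpace Z]
    (μ : ℕ → Measure Z) (μ0 : Measure Z) : Prop :=
  ∀ f : BoundedContinuousFunction Z ℝ,
    Tendsto (fun α => ∫ z, f z ∂(μ α)) atTop (nhds (∫ z, f z ∂μ0))

/-- Uniform tightness of a family of measures. -/
def UniformlyTight {Z : Type*} [MeasurableSpace Z] [TopologicalSpace Z]
    (M : Set (Measure Z)) : Prop :=
  ∀ ε : ℝ≥0∞, 0 < ε → ∃ K : Set Z, IsCompact K ∧ ∀ μ ∈ M, 1 - ε ≤ μ K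

/-- The marginal `π_i` of `←P ⊗ →Q` on `X_{0,i} × Y_{0,i-1}`. -/
noncomputable def margin (P : FeedbackFamily X Y n) (Q : ForwardFamily X Y n) (i : Fin (n + 1)) :
    Measure ((∀ j : Fin ((i : ℕ) + 1), X j) × (∀ j : Fin (i : ℕ), Y j)) :=
  (joint P Q).map (fun t =>
    ((fun j : Fin ((i : ℕ) + 1) => t.1 (Fin.castLE i.isLt j)),
     (fun j : Fin (i : ℕ) => t.2 (Fin.castLE i.isLt.le j))))

/-- The iterated product measure of a tuple of kernels `(λ_0, …, λ_n)`,
`λ_i : Y_{0,i-1} → Y_i`, on prefixes of length `k`. -/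
noncomputable def chain {Z : ℕ → Type*} [∀ i, MeasurableSpace (Z i)] {n : ℕ}
    (lam : ∀ i : Fin (n + 1), Kernel (∀ j : Fin (i : ℕ), Z j) (Z i)) :
    (k : ℕ) → k ≤ n + 1 → Measure (∀ j : Fin k, Z j)
  | 0, _ => Measure.dirac default
  | (k + 1), h =>
      ((chain lam k (by omega)) ⊗ₘ (lam ⟨k, by omega⟩)).map
        (fun t : (∀ j : Fin k, Z j) × Z k => (Fin.snoc t.1 t.2 : ∀ j : Fin (k + 1), Z j))

/-- The joint measure `←S ⊗ →R` on `X_{0,n} × Y_{0,n}` determined by a reversed pair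
`(S, R)`; a reversed pair is formally a feedback family and a forward family with the
roles of `X` and `Y` interchanged. -/
noncomputable def revJoint (S : FeedbackFamily Y X n) (R : ForwardFamily Y X n) :
    Measure ((∀ j : Fin (n + 1), X j) × (∀ j : Fin (n + 1), Y j)) :=
  (joint S R).map Prod.swap

/-- `∫ log(dσ/dπ) dμ`, as an extended real number (integral of the positive part minus
integral of the negative part). -/
noncomputable def elogInt {Z : Type*} [MeasurableSpace Z] (σ π μ : Measure Z) : EReal :=
  ((∫⁻ z, ENNReal.ofReal (llr σ π z) ∂μ : ℝ≥0∞) : EReal) -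
    ((∫⁻ z, ENNReal.ofReal (-llr σ π z) ∂μ : ℝ≥0∞) : EReal)

/-- `∫ |log(dμ/dν)| dμ`. -/
noncomputable def absKL {Z : Type*} [MeasurableSpace Z] (μ ν : Measure Z) : ℝ≥0∞ :=
  ∫⁻ z, ENNReal.ofReal |llr μ ν z| ∂μ

section Topology

variable [∀ i, TopologicalSpace (X i)] [∀ i, TopologicalSpace (Y i)]

/-- Condition (CA): each `p_i` is weakly (Feller) continuous in the conditioning
variables `(x^{i-1}, y^{i-1})`. -/
def CondCA (P : FeedbackFamily X Y n) : Prop :=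
  ∀ (i : Fin (n + 1)) (g : BoundedContinuousFunction (X i) ℝ),
    Continuous (fun t : (∀ j : Fin (i : ℕ), X j) × (∀ j : Fin (i : ℕ), Y j) =>
      ∫ x, g x ∂(P.p i t))

/-- Condition (CB): each `q_i` is weakly (Feller) continuous in the conditioning
variables `(x^i, y^{i-1})`. -/
def CondCB (Q : ForwardFamily X Y n) : Prop :=
  ∀ (i : Fin (n + 1)) (g : BoundedContinuousFunction (Y i) ℝ),
    Continuous (fun t : (∀ j : Fin ((i : ℕ) + 1), X j) × (∀ j : Fin (i : ℕ), Y j) =>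
      ∫ y, g y ∂(Q.q i (t.2, t.1)))

end Topology

/-!
Under `←P ⊗ →Q^α`, the law of `((x^{k-1}, y^{k-1}), x_k)` is the law of `(x^{k-1}, y^{k-1})`
composed with `p_k`. Condition (CA) makes `μ ↦ μ ⊗ₘ p_k` weakly continuous, so these identities
survive in the limit `π⁰`. Disintegrating `π⁰` along each `y_k` given `(y^{k-1}, x^k)` gives a
forward family `Q⁰`, and by induction on the prefix length the identities for the `p_k` rebuild
`π⁰` as `←P ⊗ →Q⁰`.
-/

open scoped BoundedContinuousFunction Topology

lemma WeakTendsto.map {W Z : Type*} [MeasurableSpace W] [TopologicalSpace W]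
    [OpensMeasurableSpace W] [MeasurableSpace Z] [TopologicalSpace Z] [BorelSpace Z]
    {μ : ℕ → Measure W} {μ0 : Measure W} (h : WeakTendsto μ μ0) {φ : W → Z}
    (hφ : Continuous φ) :
    WeakTendsto (fun α => (μ α).map φ) (μ0.map φ) := by
  intro f
  simpa [integral_map hφ.measurable.aemeasurable f.continuous.aestronglyMeasurable]
    using h (f.compContinuous ⟨φ, hφ⟩)

noncomputable def _root_.ProbabilityTheory.Kernel.integralBCF {A B : Type*}
    [TopologicalSpace A] [MeasurableSpace A] [MeasurableSpace B] [TopologicalSpace B]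
    [OpensMeasurableSpace B]
    (κ : Kernel A B) [IsMarkovKernel κ] (g : B →ᵇ ℝ)
    (hκ : Continuous fun a => ∫ b, g b ∂(κ a)) : A →ᵇ ℝ :=
  BoundedContinuousFunction.ofNormedAddCommGroup _ hκ ‖g‖ fun a => by
    simpa using g.norm_integral_le_mul_norm (κ a)

@[simp] lemma _root_.ProbabilityTheory.Kernel.integralBCF_apply {A B : Type*}
    [TopologicalSpace A] [MeasurableSpace A] [MeasurableSpace B] [TopologicalSpace B]
    [OpensMeasurableSpace B]
    (κ : Kernel A B) [IsMarkovKernel κ] (g : B →ᵇ ℝ)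
    (hκ : Continuous fun a => ∫ b, g b ∂(κ a)) (a : A) :
    κ.integralBCF g hκ a = ∫ b, g b ∂(κ a) := rfl

lemma integral_mul_compProd {A B : Type*} [MeasurableSpace A] [TopologicalSpace A]
    [OpensMeasurableSpace A] [MeasurableSpace B] [TopologicalSpace B] [OpensMeasurableSpace B]
    (μ : Measure A) [IsFiniteMeasure μ] (κ : Kernel A B) [IsMarkovKernel κ]
    (f : A →ᵇ ℝ) (g : B →ᵇ ℝ) :
    ∫ p, f p.1 * g p.2 ∂(μ ⊗ₘ κ) = ∫ a, f a * ∫ b, g b ∂(κ a) ∂μ := by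
  have hint : Integrable (fun p : A × B => f p.1 * g p.2) (μ ⊗ₘ κ) :=
    .of_bound (((f.continuous.measurable.comp measurable_fst).mul
      (g.continuous.measurable.comp measurable_snd)).aestronglyMeasurable) (‖f‖ * ‖g‖)
      (.of_forall fun p => by
        rw [norm_mul]; exact mul_le_mul (f.norm_coe_le_norm _) (g.norm_coe_le_norm _)
          (norm_nonneg _) (norm_nonneg _))
  simp_rw [Measure.integral_compProd hint, integral_const_mul]

/-- For a Feller kernel `κ`, `∫ f(a) g(b) d(μ ⊗ₘ κ) = ∫ f(a) (∫ g dκ a) dμ` integrates a bounded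
continuous function against `μ`, so it passes to weak limits; these integrals determine measures
on `A × B`. -/
lemma compProd_eq_of_weakTendsto {A B : Type*} [MeasurableSpace A] [TopologicalSpace A]
    [BorelSpace A] [HasOuterApproxClosed A] [MeasurableSpace B] [TopologicalSpace B]
    [BorelSpace B] [HasOuterApproxClosed B]
    (κ : Kernel A B) [IsMarkovKernel κ] (hκ : ∀ g : B →ᵇ ℝ, Continuous fun a => ∫ b, g b ∂(κ a))
    {μ : ℕ → Measure A} [∀ α, IsFiniteMeasure (μ α)] {μ0 : Measure A} [IsFiniteMeasure μ0]
    {ν0 : Measure (A × B)} [IsFiniteMeasure ν0]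
    (hμ : WeakTendsto μ μ0) (hν : WeakTendsto (fun α => μ α ⊗ₘ κ) ν0) :
    ν0 = μ0 ⊗ₘ κ := by
  refine Measure.ext_of_integral_mul_boundedContinuousFunction fun f g => ?_
  have h_lim : Tendsto (fun α => ∫ p, f p.1 * g p.2 ∂(μ α ⊗ₘ κ)) atTop
      (𝓝 (∫ p, f p.1 * g p.2 ∂ν0)) := by
    have h := hν ((f.compContinuous ⟨Prod.fst, continuous_fst⟩) *
      (g.compContinuous ⟨Prod.snd, continuous_snd⟩))
    simp only [BoundedContinuousFunction.mul_apply] at h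
    exact h
  have h_lim' : Tendsto (fun α => ∫ p, f p.1 * g p.2 ∂(μ α ⊗ₘ κ)) atTop
      (𝓝 (∫ p, f p.1 * g p.2 ∂(μ0 ⊗ₘ κ))) := by
    simpa only [integral_mul_compProd, BoundedContinuousFunction.mul_apply,
      Kernel.integralBCF_apply] using hμ (f * κ.integralBCF g (hκ g))
  exact tendsto_nhds_unique h_lim h_lim'

lemma restr_snoc {Z : ℕ → Type*} (k : ℕ) (a : ∀ j : Fin k, Z j) (b : Z k) :
    restr k (Fin.snoc a b : ∀ j : Fin (k + 1), Z j) = a :=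
  funext fun j => by simp [restr]

lemma snoc_restr {Z : ℕ → Type*} (k : ℕ) (z : ∀ j : Fin (k + 1), Z j) :
    (Fin.snoc (restr k z) (z (Fin.last k)) : ∀ j : Fin (k + 1), Z j) = z := by
  funext j
  induction j using Fin.lastCases with
  | last => simp
  | cast i => simp [restr]

section Prefixes

variable {X Y : ℕ → Type*}

def truncatePair {m k : ℕ} (h : k ≤ m) (t : (∀ j : Fin m, X j) × (∀ j : Fin m, Y j)) :
    (∀ j : Fin k, X j) × (∀ j : Fin k, Y j) :=
  (fun j => t.1 (Fin.castLE h j), fun j => t.2 (Fin.castLE h j))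

/-- `(x^k, y^k) ↦ ((x^{k-1}, y^{k-1}), x_k)`, the argument and the value of `p_k`. -/
def feedbackPair (k : ℕ) (t : (∀ j : Fin (k + 1), X j) × (∀ j : Fin (k + 1), Y j)) :
    ((∀ j : Fin k, X j) × (∀ j : Fin k, Y j)) × X k :=
  ((restr k t.1, restr k t.2), t.1 (Fin.last k))

/-- `(x^k, y^k) ↦ ((y^{k-1}, x^k), y_k)`, the argument and the value of `q_k`. -/
def forwardPair (k : ℕ) (t : (∀ j : Fin (k + 1), X j) × (∀ j : Fin (k + 1), Y j)) :
    ((∀ j : Fin k, Y j) × (∀ j : Fin (k + 1), X j)) × Y k :=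
  ((restr k t.2, t.1), t.2 (Fin.last k))

def ofForwardPair (k : ℕ) (t : ((∀ j : Fin k, Y j) × (∀ j : Fin (k + 1), X j)) × Y k) :
    (∀ j : Fin (k + 1), X j) × (∀ j : Fin (k + 1), Y j) :=
  (t.1.2, Fin.snoc t.1.1 t.2)

def snocX (k : ℕ) (t : ((∀ j : Fin k, X j) × (∀ j : Fin k, Y j)) × X k) :
    (∀ j : Fin k, Y j) × (∀ j : Fin (k + 1), X j) :=
  (t.1.2, Fin.snoc t.1.1 t.2)

def unsnocX (k : ℕ) (s : (∀ j : Fin k, Y j) × (∀ j : Fin (k + 1), X j)) :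
    ((∀ j : Fin k, X j) × (∀ j : Fin k, Y j)) × X k :=
  ((restr k s.2, s.1), s.2 (Fin.last k))

lemma truncatePair_self {m : ℕ} :
    truncatePair (X := X) (Y := Y) (le_refl m) = id := rfl

lemma truncatePair_comp {m k l : ℕ} (hlk : l ≤ k) (hkm : k ≤ m) :
    truncatePair (X := X) (Y := Y) hlk ∘ truncatePair hkm = truncatePair (hlk.trans hkm) := rfl

lemma truncatePair_succ (k : ℕ) :
    truncatePair (X := X) (Y := Y) (Nat.le_succ k) = Prod.fst ∘ feedbackPair k := rfl

lemma ofForwardPair_comp_forwardPair (k : ℕ) :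
    ofForwardPair (X := X) (Y := Y) k ∘ forwardPair k = id := by
  funext t
  simp [ofForwardPair, forwardPair, snoc_restr]

lemma snocX_comp_feedbackPair (k : ℕ) :
    snocX (X := X) (Y := Y) k ∘ feedbackPair k = Prod.fst ∘ forwardPair k := by
  funext t
  simp [snocX, feedbackPair, forwardPair, snoc_restr]

lemma unsnocX_comp_snocX (k : ℕ) : unsnocX (X := X) (Y := Y) k ∘ snocX k = id := by
  funext t
  simp [unsnocX, snocX, restr_snoc]

lemma feedbackPair_comp_ofForwardPair (k : ℕ) :
    feedbackPair (X := X) (Y := Y) k ∘ ofForwardPair k = unsnocX k ∘ Prod.fst := by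
  funext t
  simp [feedbackPair, ofForwardPair, unsnocX, restr_snoc]

variable [∀ i, MeasurableSpace (X i)] [∀ i, MeasurableSpace (Y i)]

attribute [fun_prop] measurable_restr

@[fun_prop]
lemma measurable_truncatePair {m k : ℕ} (h : k ≤ m) :
    Measurable (truncatePair (X := X) (Y := Y) h) := by
  unfold truncatePair; fun_prop

@[fun_prop]
lemma measurable_feedbackPair (k : ℕ) : Measurable (feedbackPair (X := X) (Y := Y) k) := by
  unfold feedbackPair; fun_prop

@[fun_prop]
lemma measurable_forwardPair (k : ℕ) : Measurable (forwardPair (X := X) (Y := Y) k) := by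
  unfold forwardPair; fun_prop

@[fun_prop]
lemma measurable_ofForwardPair (k : ℕ) : Measurable (ofForwardPair (X := X) (Y := Y) k) :=
  measurable_fst.snd.prodMk ((measurable_finSnoc k).comp (measurable_fst.fst.prodMk measurable_snd))

@[fun_prop]
lemma measurable_snocX (k : ℕ) : Measurable (snocX (X := X) (Y := Y) k) :=
  measurable_fst.snd.prodMk ((measurable_finSnoc k).comp (measurable_fst.fst.prodMk measurable_snd))

@[fun_prop]
lemma measurable_unsnocX (k : ℕ) : Measurable (unsnocX (X := X) (Y := Y) k) := by
  unfold unsnocX; fun_prop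

instance isProbabilityMeasure_map_snocX (k : ℕ)
    (μ : Measure (((∀ j : Fin k, X j) × (∀ j : Fin k, Y j)) × X k)) [IsProbabilityMeasure μ] :
    IsProbabilityMeasure (μ.map (snocX k)) :=
  Measure.isProbabilityMeasure_map (measurable_snocX k).aemeasurable

end Prefixes

section JointMarginals

variable {X Y : ℕ → Type*} [∀ i, MeasurableSpace (X i)] [∀ i, MeasurableSpace (Y i)] {n : ℕ}
  (P : FeedbackFamily X Y n) (Q : ForwardFamily X Y n)

lemma jointAux_succ (k : ℕ) (h : k + 1 ≤ n + 1) :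
    jointAux P Q (k + 1) h =
      (((jointAux P Q k (Nat.le_of_succ_le h) ⊗ₘ P.p ⟨k, h⟩).map (snocX k)) ⊗ₘ Q.q ⟨k, h⟩).map
        (ofForwardPair k) := rfl

instance isProbabilityMeasure_jointAux (k : ℕ) (h : k ≤ n + 1) :
    IsProbabilityMeasure (jointAux P Q k h) := by
  induction k with
  | zero => exact Measure.dirac.isProbabilityMeasure
  | succ k ih =>
    have := ih (Nat.le_of_succ_le h)
    have := P.markov ⟨k, h⟩
    have := Q.markov ⟨k, h⟩
    rw [jointAux_succ]
    exact Measure.isProbabilityMeasure_map (by fun_prop)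

lemma jointAux_map_feedbackPair (k : ℕ) (h : k + 1 ≤ n + 1) :
    (jointAux P Q (k + 1) h).map (feedbackPair k)
      = jointAux P Q k (Nat.le_of_succ_le h) ⊗ₘ P.p ⟨k, h⟩ := by
  have := P.markov ⟨k, h⟩
  have := Q.markov ⟨k, h⟩
  rw [jointAux_succ, Measure.map_map (by fun_prop) (by fun_prop),
    feedbackPair_comp_ofForwardPair, ← Measure.map_map (by fun_prop) measurable_fst,
    ← Measure.fst, Measure.fst_compProd, Measure.map_map (by fun_prop) (by fun_prop),
    unsnocX_comp_snocX, Measure.map_id]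

lemma jointAux_map_truncatePair {m : ℕ} (hm : m ≤ n + 1) {k : ℕ} (hk : k ≤ m) :
    (jointAux P Q m hm).map (truncatePair hk) = jointAux P Q k (hk.trans hm) := by
  induction m with
  | zero =>
    obtain rfl := Nat.le_zero.mp hk
    rw [truncatePair_self, Measure.map_id]
  | succ m ih =>
    rcases Nat.eq_or_lt_of_le hk with rfl | hkm
    · rw [truncatePair_self, Measure.map_id]
    · have := P.markov ⟨m, hm⟩
      rw [← truncatePair_comp (Nat.lt_succ_iff.mp hkm) (Nat.le_succ m),
        ← Measure.map_map (by fun_prop) (by fun_prop), truncatePair_succ,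
        ← Measure.map_map measurable_fst (by fun_prop), jointAux_map_feedbackPair,
        ← Measure.fst, Measure.fst_compProd, ih]

end JointMarginals

section Disintegration

variable {X Y : ℕ → Type*} [∀ i, MeasurableSpace (X i)] [∀ i, MeasurableSpace (Y i)]
  [∀ i, StandardBorelSpace (Y i)] {n : ℕ}

noncomputable def condForwardFamily
    (π : Measure ((∀ j : Fin (n + 1), X j) × (∀ j : Fin (n + 1), Y j)))
    [IsProbabilityMeasure π] : ForwardFamily X Y n where
  q i :=
    have : Nonempty (Y i) := ⟨(nonempty_of_isProbabilityMeasure π).some.2 i⟩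
    ((π.map (truncatePair i.isLt)).map (forwardPair i)).condKernel
  markov i := by infer_instance

theorem eq_joint_condForwardFamily (P : FeedbackFamily X Y n)
    (π : Measure ((∀ j : Fin (n + 1), X j) × (∀ j : Fin (n + 1), Y j)))
    [IsProbabilityMeasure π]
    (hP : ∀ k (hk : k + 1 ≤ n + 1), (π.map (truncatePair hk)).map (feedbackPair k)
      = π.map (truncatePair (Nat.le_of_succ_le hk)) ⊗ₘ P.p ⟨k, hk⟩) :
    π = joint P (condForwardFamily π) := by
  suffices h : ∀ k (hk : k ≤ n + 1),
      π.map (truncatePair hk) = jointAux P (condForwardFamily π) k hk by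
    have h_full := h (n + 1) le_rfl
    rwa [truncatePair_self, Measure.map_id] at h_full
  intro k hk
  induction k with
  | zero =>
    rw [show truncatePair hk = fun _ => default from funext fun _ => Subsingleton.elim _ _,
      Measure.map_const, measure_univ, one_smul]
    rfl
  | succ k ih =>
    set ρ := (π.map (truncatePair hk)).map (forwardPair k)
    have : Nonempty (Y k) := ⟨(nonempty_of_isProbabilityMeasure π).some.2 ⟨k, hk⟩⟩
    have hρ_fst : ρ.fst = ((π.map (truncatePair hk)).map (feedbackPair k)).map (snocX k) := by
      rw [Measure.fst, Measure.map_map measurable_fst (measurable_forwardPair k),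
        Measure.map_map (measurable_snocX k) (measurable_feedbackPair k),
        snocX_comp_feedbackPair]
    rw [hP, ih] at hρ_fst
    calc π.map (truncatePair hk)
        = ρ.map (ofForwardPair k) := by
          rw [Measure.map_map (by fun_prop) (by fun_prop), ofForwardPair_comp_forwardPair,
            Measure.map_id]
      _ = (ρ.fst ⊗ₘ ρ.condKernel).map (ofForwardPair k) := by rw [ρ.disintegrate]
      _ = jointAux P (condForwardFamily π) (k + 1) hk := by rw [hρ_fst, jointAux_succ]; rfl

end Disintegration

section Continuity

variable {X Y : ℕ → Type*} [∀ i, TopologicalSpace (X i)] [∀ i, TopologicalSpace (Y i)]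

@[fun_prop]
lemma continuous_truncatePair {m k : ℕ} (h : k ≤ m) :
    Continuous (truncatePair (X := X) (Y := Y) h) := by
  unfold truncatePair; fun_prop

@[fun_prop]
lemma continuous_feedbackPair (k : ℕ) : Continuous (feedbackPair (X := X) (Y := Y) k) := by
  unfold feedbackPair restr; fun_prop

end Continuity

section Statements

variable {X Y : ℕ → Type*} {n : ℕ}
  [∀ i, TopologicalSpace (X i)] [∀ i, MeasurableSpace (X i)] [∀ i, BorelSpace (X i)]
  [∀ i, PolishSpace (X i)]
  [∀ i, TopologicalSpace (Y i)] [∀ i, MeasurableSpace (Y i)] [∀ i, BorelSpace (Y i)]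
  [∀ i, PolishSpace (Y i)]

theorem weak_limit_has_same_feedback_family_general
    (P : FeedbackFamily X Y n) (hCA : CondCA P)
    (Q : ℕ → ForwardFamily X Y n)
    (π0 : Measure ((∀ j : Fin (n + 1), X j) × (∀ j : Fin (n + 1), Y j)))
    (hπ0 : IsProbabilityMeasure π0)
    (hconv : WeakTendsto (fun α => joint P (Q α)) π0) :
    ∃ Q0 : ForwardFamily X Y n, π0 = joint P Q0 := by
  refine ⟨condForwardFamily π0, eq_joint_condForwardFamily P π0 fun k hk => ?_⟩
  have := P.markov ⟨k, hk⟩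
  have h_past : WeakTendsto (fun α => jointAux P (Q α) k (Nat.le_of_succ_le hk))
      (π0.map (truncatePair (Nat.le_of_succ_le hk))) := by
    simpa only [joint, jointAux_map_truncatePair] using
      hconv.map (continuous_truncatePair (Nat.le_of_succ_le hk))
  have h_step : WeakTendsto (fun α => jointAux P (Q α) k (Nat.le_of_succ_le hk) ⊗ₘ P.p ⟨k, hk⟩)
      ((π0.map (truncatePair hk)).map (feedbackPair k)) := by
    simpa only [joint, jointAux_map_truncatePair, jointAux_map_feedbackPair] using
      (hconv.map (continuous_truncatePair hk)).map (continuous_feedbackPair k)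
  exact compProd_eq_of_weakTendsto _ (hCA ⟨k, hk⟩) h_past h_step

/-- If the `Y_i` are compact Polish, the `X_i` Polish, the feedback
family `P` satisfies (CA), and the joint measures `←P ⊗ →Q^α` converge weakly to a
probability measure `π⁰`, then `π⁰ = ←P ⊗ →Q⁰` for some forward family `Q⁰`; in
particular the limiting joint measure has the same feedback family `P`. -/
theorem weak_limit_has_same_feedback_family [∀ i, CompactSpace (Y i)]
    (P : FeedbackFamily X Y n) (hCA : CondCA P)
    (Q : ℕ → ForwardFamily X Y n)
    (π0 : Measure ((∀ j : Fin (n + 1), X j) × (∀ j : Fin (n + 1), Y j)))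
    (hπ0 : IsProbabilityMeasure π0)
    (hconv : WeakTendsto (fun α => joint P (Q α)) π0) :
    ∃ Q0 : ForwardFamily X Y n, π0 = joint P Q0 :=
  weak_limit_has_same_feedback_family_general P hCA Q π0 hπ0 hconv

end Statements

end PaperDI
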